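/- arXiv:1511.01795 — 7 statements merged into one kernel-verified Lean document; each statement's English description precedes it below -/
import Mathlib

section
/- Fix 0 < p < 1. For each sharing probability q ∈ [0,1], let T_∪(q) be the unique real number T satisfying T = p²·(1+T) + (1−p)²·1 + 2(1−p)p·(q·2 + (1−q)·(1 + 1/(1−p))). Then T_∪ is minimized over q ∈ [0,1] uniquely at q = 1, with minimum value T*_∪ = (−2p² + 2p + 1)/(1−p²). -/
/-! The fixed-point equation is linear in `T` with coefficient `p² < 1`, so it has the closed-form
solution `T_∪(q) = (1 + 2p - 2p²q)/(1 - p²)`, which is affine in `q` with negative slope. -/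

noncomputable def unionCompletionTime (p q : ℝ) : ℝ :=
  (1 + 2 * p - 2 * p ^ 2 * q) / (1 - p ^ 2)

theorem unionCompletionTime_strictAnti {p : ℝ} (hp0 : 0 < p) (hp1 : p < 1) :
    StrictAnti (unionCompletionTime p) := by
  intro q r hqr
  have hden : 0 < 1 - p ^ 2 := by nlinarith
  unfold unionCompletionTime
  gcongr

theorem eq_unionCompletionTime_of_fixedPoint {p q T : ℝ} (hp0 : 0 < p) (hp1 : p < 1)
    (hT : T = p ^ 2 * (1 + T) + (1 - p) ^ 2 * 1 +
      2 * (1 - p) * p * (q * 2 + (1 - q) * (1 + 1 / (1 - p)))) :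
    T = unionCompletionTime p q := by
  have h1p : 1 - p ≠ 0 := by linarith
  have h1p2 : 1 - p ^ 2 ≠ 0 := by nlinarith
  unfold unionCompletionTime
  rw [eq_div_iff h1p2]
  field_simp at hT
  linear_combination hT

/-- For `0 < p < 1`, if `T q` solves the fixed-point equation
`T = p²(1+T) + (1-p)²·1 + 2(1-p)p·(q·2 + (1-q)(1 + 1/(1-p)))` for each
sharing probability `q ∈ [0,1]`, then `T` is minimized over `[0,1]` uniquely at
`q = 1`, with minimum value `(-2p² + 2p + 1)/(1-p²)`. -/
theorem optimal_sharing_probability (p : ℝ) (hp0 : 0 < p) (hp1 : p < 1)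
    (T : ℝ → ℝ)
    (hT : ∀ q ∈ Set.Icc (0 : ℝ) 1,
      T q = p ^ 2 * (1 + T q) + (1 - p) ^ 2 * 1 +
        2 * (1 - p) * p * (q * 2 + (1 - q) * (1 + 1 / (1 - p)))) :
    T 1 = (-2 * p ^ 2 + 2 * p + 1) / (1 - p ^ 2) ∧
    ∀ q ∈ Set.Icc (0 : ℝ) 1, q ≠ 1 → T 1 < T q := by
  have hT' : ∀ q ∈ Set.Icc (0 : ℝ) 1, T q = unionCompletionTime p q := fun q hq =>
    eq_unionCompletionTime_of_fixedPoint hp0 hp1 (hT q hq)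
  have hT1 := hT' 1 (Set.right_mem_Icc.mpr zero_le_one)
  refine ⟨by rw [hT1, unionCompletionTime]; ring, fun q hq hq1 => ?_⟩
  rw [hT1, hT' q hq]
  exact unionCompletionTime_strictAnti hp0 hp1 (lt_of_le_of_ne hq.2 hq1)
end

section
/- Define f(N) = 1 + (1 − (1−p)^N)/(1 − p^N) for integers N ≥ 1 and a real p with 0 < p < 1. If p < 1/2 then f(N) is strictly increasing in N; if p > 1/2 then f(N) is strictly decreasing in N; and if p = 1/2 then f(N) = 2 for all N ≥ 1. -/
/-!
Write `q = 1 - p`. Cross-multiplying, `f(n+1) < f(n+2)` is equivalent to the positivity of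
`(1 - q^(n+2))(1 - p^(n+1)) - (1 - q^(n+1))(1 - p^(n+2)) = pq(q^n - p^n) + p^(n+1)q^(n+1)(q - p)`,
and both summands have the sign of `q - p`. Swapping `p` and `q` inverts the ratio, which gives
the decreasing case; for `p = 1/2` numerator and denominator coincide.
-/

theorem one_sub_pow_cross_sub_eq {R : Type*} [CommRing R] {p q : R} (hpq : p + q = 1) (n : ℕ) :
    (1 - q ^ (n + 2)) * (1 - p ^ (n + 1)) - (1 - q ^ (n + 1)) * (1 - p ^ (n + 2)) =
      p * q * (q ^ n - p ^ n) + p ^ (n + 1) * q ^ (n + 1) * (q - p) := by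
  obtain rfl : q = 1 - p := eq_sub_of_add_eq' hpq
  ring

section OrderedField

variable {K : Type*} [Field K] [LinearOrder K] [IsStrictOrderedRing K]

theorem one_sub_pow_pos {a : K} (h0 : 0 ≤ a) (h1 : a < 1) {n : ℕ} (hn : n ≠ 0) :
    0 < 1 - a ^ n :=
  sub_pos.2 (pow_lt_one₀ h0 h1 hn)

theorem one_sub_pow_div_one_sub_pow_lt_succ {p q : K} (hp : 0 < p) (hpq : p < q)
    (hsum : p + q = 1) (n : ℕ) :
    (1 - q ^ (n + 1)) / (1 - p ^ (n + 1)) < (1 - q ^ (n + 2)) / (1 - p ^ (n + 2)) := by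
  have hp1 : p < 1 := by linarith
  rw [div_lt_div_iff₀ (one_sub_pow_pos hp.le hp1 n.succ_ne_zero)
    (one_sub_pow_pos hp.le hp1 (n + 1).succ_ne_zero), ← sub_pos, one_sub_pow_cross_sub_eq hsum]
  have hq : 0 < q := hp.trans hpq
  have hpow : p ^ n ≤ q ^ n := pow_le_pow_left₀ hp.le hpq.le n
  have : 0 < p ^ (n + 1) * q ^ (n + 1) * (q - p) := by positivity
  nlinarith [mul_pos hp hq]

theorem strictMono_one_sub_pow_div_one_sub_pow {p q : K} (hp : 0 < p) (hpq : p < q)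
    (hsum : p + q = 1) :
    StrictMono fun n : ℕ => (1 - q ^ (n + 1)) / (1 - p ^ (n + 1)) :=
  strictMono_nat_of_lt_succ (one_sub_pow_div_one_sub_pow_lt_succ hp hpq hsum)

theorem strictAnti_one_sub_pow_div_one_sub_pow {p q : K} (hq : 0 < q) (hqp : q < p)
    (hsum : p + q = 1) :
    StrictAnti fun n : ℕ => (1 - q ^ (n + 1)) / (1 - p ^ (n + 1)) := by
  intro m n hmn
  have hp1 : p < 1 := by linarith
  have hq1 : q < 1 := hqp.trans hp1
  have hpos : 0 < (1 - p ^ (m + 1)) / (1 - q ^ (m + 1)) :=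
    div_pos (one_sub_pow_pos (hq.trans hqp).le hp1 m.succ_ne_zero)
      (one_sub_pow_pos hq.le hq1 m.succ_ne_zero)
  simp only [← inv_div (1 - p ^ _)]
  exact inv_strictAnti₀ hpos
    (strictMono_one_sub_pow_div_one_sub_pow hq hqp (by rwa [add_comm]) hmn)

end OrderedField

/-- For `f(N) = 1 + (1 - (1-p)^N)/(1 - p^N)` with `0 < p < 1`: if `p < 1/2` then
`f` is strictly increasing in `N ≥ 1`; if `p > 1/2` then `f` is strictly
decreasing in `N ≥ 1`; and if `p = 1/2` then `f(N) = 2` for all `N ≥ 1`. -/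
theorem monotonicity_completion_time (p : ℝ) (hp0 : 0 < p) (hp1 : p < 1) :
    (p < 1 / 2 → ∀ N M : ℕ, 1 ≤ N → N < M →
      1 + (1 - (1 - p) ^ N) / (1 - p ^ N) < 1 + (1 - (1 - p) ^ M) / (1 - p ^ M)) ∧
    (p > 1 / 2 → ∀ N M : ℕ, 1 ≤ N → N < M →
      1 + (1 - (1 - p) ^ M) / (1 - p ^ M) < 1 + (1 - (1 - p) ^ N) / (1 - p ^ N)) ∧
    (p = 1 / 2 → ∀ N : ℕ, 1 ≤ N →
      1 + (1 - (1 - p) ^ N) / (1 - p ^ N) = 2) := by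
  have hsum : p + (1 - p) = 1 := add_sub_cancel p 1
  refine ⟨fun hp N M hN hNM => ?_, fun hp N M hN hNM => ?_, fun hp N hN => ?_⟩
  · obtain ⟨n, rfl⟩ := Nat.exists_eq_add_of_le' hN
    obtain ⟨m, rfl⟩ := Nat.exists_eq_add_of_le' (hN.trans hNM.le)
    exact (add_lt_add_iff_left 1).2
      (strictMono_one_sub_pow_div_one_sub_pow hp0 (by linarith) hsum (by omega))
  · obtain ⟨n, rfl⟩ := Nat.exists_eq_add_of_le' hN
    obtain ⟨m, rfl⟩ := Nat.exists_eq_add_of_le' (hN.trans hNM.le)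
    exact (add_lt_add_iff_left 1).2
      (strictAnti_one_sub_pow_div_one_sub_pow (by linarith) (by linarith) hsum (by omega))
  · have hq : 1 - p = p := by rw [hp]; norm_num
    rw [hq, div_self (one_sub_pow_pos hp0.le hp1 (by omega)).ne']
    norm_num
end

section
/- Let 0 ≤ p₁ ≤ p₂ < 1. Define T_= = [p₁p₂ + (1−p₁)(1−p₂) + p₁(1−p₂)(1 + 1/(1−p₁)) + p₂(1−p₁)(1 + 1/(1−p₂))]/(1 − p₁p₂) and T*_∪ = {p₁p₂ + (1−p₁)(1−p₂) + 2(1−p₂)p₁ + (1−p₁)p₂·[2(1−p₂)p₁/((1−p₁)p₂) + ((p₂−p₁)/((1−p₁)p₂))·(1 + 1/(1−p₂))]}/(1 − p₁p₂), where for p₂ = 0 (hence p₁ = 0) the bracketed term is interpreted so that T*_∪ = T_= . Then T*_∪ ≤ T_= . -/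
/-! The gap between the two completion times has the closed form
`T_= - T*_∪ = p₁ (p₁ (1 - p₂) + p₂ (1 - p₁)) / ((1 - p₁) (1 - p₁ p₂))`,
visibly nonnegative for probabilities `p₁, p₂ < 1`. The identity also holds at `p₂ = 0`,
where `x / 0 = 0` makes the bracketed term of `T*_∪` vanish. -/

/-- `T_=`: the completion time without content sharing. -/
noncomputable def completionTimeAlone (p₁ p₂ : ℝ) : ℝ :=
  (p₁ * p₂ + (1 - p₁) * (1 - p₂) + p₁ * (1 - p₂) * (1 + 1 / (1 - p₁)) +
    p₂ * (1 - p₁) * (1 + 1 / (1 - p₂))) / (1 - p₁ * p₂)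

/-- `T*_∪`: the completion time under the optimal equal-reciprocal sharing scheme. -/
noncomputable def completionTimeShared (p₁ p₂ : ℝ) : ℝ :=
  (p₁ * p₂ + (1 - p₁) * (1 - p₂) + 2 * (1 - p₂) * p₁ +
    (1 - p₁) * p₂ *
      (2 * (1 - p₂) * p₁ / ((1 - p₁) * p₂) +
        ((p₂ - p₁) / ((1 - p₁) * p₂)) * (1 + 1 / (1 - p₂)))) / (1 - p₁ * p₂)

theorem completionTimeAlone_sub_completionTimeShared {p₁ p₂ : ℝ} (h₁ : p₁ ≠ 1) (h₂ : p₂ ≠ 1) :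
    completionTimeAlone p₁ p₂ - completionTimeShared p₁ p₂ =
      p₁ * (p₁ * (1 - p₂) + p₂ * (1 - p₁)) / (1 - p₁) / (1 - p₁ * p₂) := by
  have h₁' : 1 - p₁ ≠ 0 := sub_ne_zero.2 h₁.symm
  have h₂' : 1 - p₂ ≠ 0 := sub_ne_zero.2 h₂.symm
  unfold completionTimeAlone completionTimeShared
  rw [← sub_div]
  congr 1
  rcases eq_or_ne p₂ 0 with rfl | hp₂ <;> field_simp <;> ring

theorem completionTimeShared_le_completionTimeAlone {p₁ p₂ : ℝ} (h₁ : 0 ≤ p₁) (h₁' : p₁ < 1)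
    (h₂ : 0 ≤ p₂) (h₂' : p₂ < 1) :
    completionTimeShared p₁ p₂ ≤ completionTimeAlone p₁ p₂ := by
  rw [← sub_nonneg, completionTimeAlone_sub_completionTimeShared h₁'.ne h₂'.ne]
  have hq₁ : 0 ≤ 1 - p₁ := by linarith
  have hq₂ : 0 ≤ 1 - p₂ := by linarith
  have hq₁₂ : 0 ≤ 1 - p₁ * p₂ := by nlinarith
  positivity

/-- For `0 ≤ p₁ ≤ p₂ < 1`, the optimal equal-reciprocal completion time `T*_∪`
is at most the no-sharing completion time `T_=`. (Division by zero in Lean makes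
the `p₂ = 0` case agree with the intended interpretation `T*_∪ = T_=`.) -/
theorem social_grouping_helps (p₁ p₂ : ℝ) (h0 : 0 ≤ p₁) (h12 : p₁ ≤ p₂) (h2 : p₂ < 1) :
    (p₁ * p₂ + (1 - p₁) * (1 - p₂) + 2 * (1 - p₂) * p₁ +
        (1 - p₁) * p₂ *
          (2 * (1 - p₂) * p₁ / ((1 - p₁) * p₂) +
            ((p₂ - p₁) / ((1 - p₁) * p₂)) * (1 + 1 / (1 - p₂)))) / (1 - p₁ * p₂) ≤
      (p₁ * p₂ + (1 - p₁) * (1 - p₂) + p₁ * (1 - p₂) * (1 + 1 / (1 - p₁)) +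
        p₂ * (1 - p₁) * (1 + 1 / (1 - p₂))) / (1 - p₁ * p₂) :=
  completionTimeShared_le_completionTimeAlone h0 (h12.trans_lt h2) (h0.trans h12) h2
end

section
/- Let 0 ≤ p₁ ≤ p₂ < 1 and set Δ = p₂ − p₁. Define the full-cooperation completion time T_f = [p₁p₂ + (1−p₁)(1−p₂) + 2p₁(1−p₂) + 2p₂(1−p₁)]/(1 − p₁p₂), and the optimal equal-reciprocal completion time T*_∪ = {p₁p₂ + (1−p₁)(1−p₂) + 2(1−p₂)p₁ + (1−p₁)p₂·[2(1−p₂)p₁/((1−p₁)p₂) + ((p₂−p₁)/((1−p₁)p₂))·(1 + 1/(1−p₂))]}/(1 − p₁p₂) (for p₂ > 0). Then T*_∪ − T_f = [Δ/(1 − (p₂−Δ)p₂)]·(1/(1−p₂) − 1). -/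
/-!
Both completion times share the denominator `1 - p₁p₂`, so only the numerators need comparing.
In the equal-reciprocal numerator the factor `(1 - p₁)p₂` (the probability that only `c₁` is
served) cancels against the sharing probability `p*_{1→2}`, and what is left differs from the
full-cooperation numerator by `Δ(1 + 1/(1 - p₂)) - 2Δ = Δ(1/(1 - p₂) - 1)`.
-/

lemma equalReciprocal_numerator_sub_fullCoop_numerator (p₁ p₂ : ℝ) (h : (1 - p₁) * p₂ ≠ 0) :
    (p₁ * p₂ + (1 - p₁) * (1 - p₂) + 2 * (1 - p₂) * p₁ +
        (1 - p₁) * p₂ *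
          (2 * (1 - p₂) * p₁ / ((1 - p₁) * p₂) +
            ((p₂ - p₁) / ((1 - p₁) * p₂)) * (1 + 1 / (1 - p₂)))) -
      (p₁ * p₂ + (1 - p₁) * (1 - p₂) + 2 * p₁ * (1 - p₂) + 2 * p₂ * (1 - p₁)) =
    (p₂ - p₁) * (1 / (1 - p₂) - 1) := by
  rw [mul_add, mul_div_cancel₀ _ h, ← mul_assoc, mul_div_cancel₀ _ h]
  ring

theorem performance_loss_formula_general (p₁ p₂ : ℝ) (h12 : p₁ ≤ p₂)
    (h2 : p₂ < 1) (hpos : 0 < p₂) :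
    (p₁ * p₂ + (1 - p₁) * (1 - p₂) + 2 * (1 - p₂) * p₁ +
        (1 - p₁) * p₂ *
          (2 * (1 - p₂) * p₁ / ((1 - p₁) * p₂) +
            ((p₂ - p₁) / ((1 - p₁) * p₂)) * (1 + 1 / (1 - p₂)))) / (1 - p₁ * p₂) -
      (p₁ * p₂ + (1 - p₁) * (1 - p₂) + 2 * p₁ * (1 - p₂) +
        2 * p₂ * (1 - p₁)) / (1 - p₁ * p₂) =
    ((p₂ - p₁) / (1 - (p₂ - (p₂ - p₁)) * p₂)) * (1 / (1 - p₂) - 1) := by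
  have hserved : (1 - p₁) * p₂ ≠ 0 := mul_ne_zero (by linarith) hpos.ne'
  rw [← sub_div, equalReciprocal_numerator_sub_fullCoop_numerator p₁ p₂ hserved,
    sub_sub_cancel, div_mul_eq_mul_div]

/-- For `0 ≤ p₁ ≤ p₂ < 1` with `p₂ > 0` and `Δ = p₂ - p₁`, the performance loss
of the optimal equal-reciprocal scheme relative to full cooperation is
`T*_∪ - T_f = (Δ/(1 - (p₂-Δ)p₂))·(1/(1-p₂) - 1)`. -/
theorem performance_loss_formula (p₁ p₂ : ℝ) (h0 : 0 ≤ p₁) (h12 : p₁ ≤ p₂)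
    (h2 : p₂ < 1) (hpos : 0 < p₂) :
    (p₁ * p₂ + (1 - p₁) * (1 - p₂) + 2 * (1 - p₂) * p₁ +
        (1 - p₁) * p₂ *
          (2 * (1 - p₂) * p₁ / ((1 - p₁) * p₂) +
            ((p₂ - p₁) / ((1 - p₁) * p₂)) * (1 + 1 / (1 - p₂)))) / (1 - p₁ * p₂) -
      (p₁ * p₂ + (1 - p₁) * (1 - p₂) + 2 * p₁ * (1 - p₂) +
        2 * p₂ * (1 - p₁)) / (1 - p₁ * p₂) =
    ((p₂ - p₁) / (1 - (p₂ - (p₂ - p₁)) * p₂)) * (1 / (1 - p₂) - 1) :=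
  performance_loss_formula_general p₁ p₂ h12 h2 hpos
end

section
/- Let 0 < p₁ ≤ p₂ < 1. For (a,b) ∈ [0,1]² let T(a,b) be the unique real number T satisfying T·(1 − p₁p₂) = p₁p₂ + (1−p₁)(1−p₂) + (1−p₂)p₁·[2b + (1−b)(1 + 1/(1−p₁))] + (1−p₁)p₂·[2a + (1−a)(1 + 1/(1−p₂))]. Then over all (a,b) ∈ [0,1]² satisfying the equal-reciprocal constraint (1−p₁)p₂·a = (1−p₂)p₁·b, the function T(a,b) is minimized at a* = (1−p₂)p₁/((1−p₁)p₂) and b* = 1. -/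
/-! Writing `u = 1 / (1 - p)`, the bracket `2x + (1 - x)(1 + u)` equals `1 + u - x(u - 1)` and
`u ≥ 1`, so `T` is antitone in each sharing probability. Along the constraint, `b ≤ 1` forces
`a ≤ a*`, hence both probabilities are largest at `(a*, 1)`, which is feasible because `p₁ ≤ p₂`. -/

/-- Expected completion time when only one user received the packet in the first slot: it is
shared with probability `x`, otherwise the other user, whose channel is OFF with probability `p`,
waits for a retransmission. -/
noncomputable def sharingCost (p x : ℝ) : ℝ := 2 * x + (1 - x) * (1 + 1 / (1 - p))

theorem sharingCost_antitone {p : ℝ} (hp₀ : 0 ≤ p) (hp₁ : p < 1) : Antitone (sharingCost p) := by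
  intro x y hxy
  have hu : 1 ≤ 1 / (1 - p) := by rw [le_div_iff₀ (by linarith)]; linarith
  unfold sharingCost
  nlinarith [mul_nonneg (sub_nonneg.2 hxy) (sub_nonneg.2 hu)]

noncomputable def optimalShare (p₁ p₂ : ℝ) : ℝ := (1 - p₂) * p₁ / ((1 - p₁) * p₂)

section optimalShare

variable {p₁ p₂ : ℝ}

theorem mul_optimalShare (hp₁ : p₁ ≠ 1) (hp₂ : p₂ ≠ 0) :
    (1 - p₁) * p₂ * optimalShare p₁ p₂ = (1 - p₂) * p₁ :=
  mul_div_cancel₀ _ (mul_ne_zero (sub_ne_zero.2 hp₁.symm) hp₂)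

theorem optimalShare_mem_Icc (h₁ : 0 < p₁) (h₁₂ : p₁ ≤ p₂) (h₂ : p₂ < 1) :
    optimalShare p₁ p₂ ∈ Set.Icc (0 : ℝ) 1 := by
  have hden : 0 < (1 - p₁) * p₂ := mul_pos (by linarith) (by linarith)
  refine ⟨div_nonneg (mul_nonneg (by linarith) h₁.le) hden.le, ?_⟩
  rw [optimalShare, div_le_one hden]
  nlinarith

theorem le_optimalShare (h₁ : 0 < p₁) (h₁₂ : p₁ ≤ p₂) (h₂ : p₂ < 1) {a b : ℝ} (hb : b ≤ 1)
    (hab : (1 - p₁) * p₂ * a = (1 - p₂) * p₁ * b) : a ≤ optimalShare p₁ p₂ := by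
  have hden : 0 < (1 - p₁) * p₂ := mul_pos (by linarith) (by linarith)
  rw [optimalShare, le_div_iff₀ hden, mul_comm, hab]
  exact mul_le_of_le_one_right (mul_nonneg (by linarith) h₁.le) hb

end optimalShare

/-- For `0 < p₁ ≤ p₂ < 1`: if `T a b` solves the stated fixed-point equation for
each pair of sharing probabilities `(a,b) ∈ [0,1]²`, then over all `(a,b)`
satisfying the equal-reciprocal constraint `(1-p₁)p₂·a = (1-p₂)p₁·b`, the
completion time `T` is minimized at `a* = (1-p₂)p₁/((1-p₁)p₂)` and `b* = 1`. -/
theorem optimal_asymmetric_sharing (p₁ p₂ : ℝ) (h1 : 0 < p₁) (h12 : p₁ ≤ p₂)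
    (h2 : p₂ < 1) (T : ℝ → ℝ → ℝ)
    (hT : ∀ a ∈ Set.Icc (0 : ℝ) 1, ∀ b ∈ Set.Icc (0 : ℝ) 1,
      T a b * (1 - p₁ * p₂) =
        p₁ * p₂ + (1 - p₁) * (1 - p₂) +
          (1 - p₂) * p₁ * (2 * b + (1 - b) * (1 + 1 / (1 - p₁))) +
          (1 - p₁) * p₂ * (2 * a + (1 - a) * (1 + 1 / (1 - p₂)))) :
    (1 - p₂) * p₁ / ((1 - p₁) * p₂) ∈ Set.Icc (0 : ℝ) 1 ∧
    (1 - p₁) * p₂ * ((1 - p₂) * p₁ / ((1 - p₁) * p₂)) = (1 - p₂) * p₁ * 1 ∧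
    ∀ a ∈ Set.Icc (0 : ℝ) 1, ∀ b ∈ Set.Icc (0 : ℝ) 1,
      (1 - p₁) * p₂ * a = (1 - p₂) * p₁ * b →
      T ((1 - p₂) * p₁ / ((1 - p₁) * p₂)) 1 ≤ T a b := by
  have hp₂ : 0 < p₂ := h1.trans_le h12
  have hp₁ : p₁ < 1 := h12.trans_lt h2
  have hmem : optimalShare p₁ p₂ ∈ Set.Icc (0 : ℝ) 1 := optimalShare_mem_Icc h1 h12 h2
  refine ⟨hmem, (mul_optimalShare hp₁.ne hp₂.ne').trans (mul_one _).symm, ?_⟩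
  intro a ha b hb hab
  show T (optimalShare p₁ p₂) 1 ≤ T a b
  have hT' : ∀ a ∈ Set.Icc (0 : ℝ) 1, ∀ b ∈ Set.Icc (0 : ℝ) 1, T a b * (1 - p₁ * p₂) =
      p₁ * p₂ + (1 - p₁) * (1 - p₂) + (1 - p₂) * p₁ * sharingCost p₁ b +
        (1 - p₁) * p₂ * sharingCost p₂ a := hT
  have hcost₁ := sharingCost_antitone h1.le hp₁ hb.2
  have hcost₂ := sharingCost_antitone hp₂.le h2 (le_optimalShare h1 h12 h2 hb.2 hab)
  have hD : 0 < 1 - p₁ * p₂ := by nlinarith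
  refine le_of_mul_le_mul_right ?_ hD
  rw [hT' _ hmem 1 (Set.right_mem_Icc.2 zero_le_one), hT' a ha b hb]
  have hc₁ : 0 ≤ (1 - p₂) * p₁ := mul_nonneg (by linarith) h1.le
  have hc₂ : 0 ≤ (1 - p₁) * p₂ := mul_nonneg (by linarith) hp₂.le
  linarith [mul_le_mul_of_nonneg_left hcost₁ hc₁, mul_le_mul_of_nonneg_left hcost₂ hc₂]
end

section
/- Fix 0 < p < 1 and 0 ≤ γ < 1. For each sharing probability q ∈ [0,1], let T(q) be the unique real number T satisfying T = p²·(1+T) + (1−p)²·1 + 2(1−p)p·(q·(1 + 1/(1−γ)) + (1−q)·(1 + 1/(1−p))). Then T(q) is an affine function of q; if γ ≤ p then T is minimized over [0,1] at q = 1 with minimum value (1 + 2p(1−p)/(1−γ))/(1 − p²), and if γ ≥ p then T is minimized at q = 0 with minimum value (2p+1)/(1−p²). -/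
/-!
Solving the renewal equation `T = p²(1 + T) + c` gives `T = (p² + c) / (1 - p²)`, where
`c = (1-p)² + 2p(1-p)·S(q)` and `S(q) = q·(1 + 1/(1-γ)) + (1-q)·(1 + 1/(1-p))` is affine in `q`.
Since `2p(1-p) ≥ 0`, `T` increases with `S`, which is minimized at the endpoint carrying the
smaller of the two delays `1/(1-γ)` and `1/(1-p)`: at `q = 1` when `γ ≤ p`, at `q = 0` when
`γ ≥ p`.
-/

/-- Expected remaining time once exactly one user holds the packet: with probability `q` it is
shared over D2D, otherwise the base station retransmits. -/
noncomputable def singleReceptionTime (p γ q : ℝ) : ℝ :=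
  q * (1 + 1 / (1 - γ)) + (1 - q) * (1 + 1 / (1 - p))

theorem eq_div_of_eq_mul_one_add_add {a c x : ℝ} (ha : a ≠ 1) (hx : x = a * (1 + x) + c) :
    x = (a + c) / (1 - a) := by
  rw [eq_div_iff (sub_ne_zero.2 ha.symm)]
  linear_combination hx

theorem le_mul_add_one_sub_mul_of_le {a b q : ℝ} (hab : a ≤ b) (hq : q ≤ 1) :
    a ≤ q * a + (1 - q) * b := by
  nlinarith

theorem le_mul_add_one_sub_mul_of_ge {a b q : ℝ} (hba : b ≤ a) (hq : 0 ≤ q) :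
    b ≤ q * a + (1 - q) * b := by
  nlinarith

theorem singleReceptionTime_one_le {p γ q : ℝ} (hγp : γ ≤ p) (hp1 : p < 1) (hq : q ≤ 1) :
    singleReceptionTime p γ 1 ≤ singleReceptionTime p γ q := by
  have hdelay : 1 / (1 - γ) ≤ 1 / (1 - p) := one_div_le_one_div_of_le (by linarith) (by linarith)
  simpa only [singleReceptionTime, one_mul, sub_self, zero_mul, add_zero] using
    le_mul_add_one_sub_mul_of_le (add_le_add_right hdelay 1) hq

theorem singleReceptionTime_zero_le {p γ q : ℝ} (hpγ : p ≤ γ) (hγ1 : γ < 1) (hq : 0 ≤ q) :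
    singleReceptionTime p γ 0 ≤ singleReceptionTime p γ q := by
  have hdelay : 1 / (1 - p) ≤ 1 / (1 - γ) := one_div_le_one_div_of_le (by linarith) (by linarith)
  simpa only [singleReceptionTime, zero_mul, sub_zero, one_mul, zero_add] using
    le_mul_add_one_sub_mul_of_ge (add_le_add_right hdelay 1) hq

theorem unreliable_local_sharing_general (p γ : ℝ) (hp0 : 0 < p) (hp1 : p < 1)
    (hγ1 : γ < 1) (T : ℝ → ℝ)
    (hT : ∀ q ∈ Set.Icc (0 : ℝ) 1,
      T q = p ^ 2 * (1 + T q) + (1 - p) ^ 2 * 1 +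
        2 * (1 - p) * p * (q * (1 + 1 / (1 - γ)) + (1 - q) * (1 + 1 / (1 - p)))) :
    (∃ A B : ℝ, ∀ q ∈ Set.Icc (0 : ℝ) 1, T q = A * q + B) ∧
    (γ ≤ p →
      T 1 = (1 + 2 * p * (1 - p) / (1 - γ)) / (1 - p ^ 2) ∧
      ∀ q ∈ Set.Icc (0 : ℝ) 1, T 1 ≤ T q) ∧
    (γ ≥ p →
      T 0 = (2 * p + 1) / (1 - p ^ 2) ∧
      ∀ q ∈ Set.Icc (0 : ℝ) 1, T 0 ≤ T q) := by
  have hT' : ∀ q ∈ Set.Icc (0 : ℝ) 1, T q =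
      (p ^ 2 + ((1 - p) ^ 2 * 1 + 2 * (1 - p) * p * singleReceptionTime p γ q)) / (1 - p ^ 2) :=
    fun q hq => eq_div_of_eq_mul_one_add_add (by nlinarith) ((hT q hq).trans (add_assoc _ _ _))
  have hmono : ∀ q ∈ Set.Icc (0 : ℝ) 1, ∀ r ∈ Set.Icc (0 : ℝ) 1,
      singleReceptionTime p γ q ≤ singleReceptionTime p γ r → T q ≤ T r := by
    intro q hq r hr hqr
    rw [hT' q hq, hT' r hr]
    gcongr
    nlinarith
  have h0 : (0 : ℝ) ∈ Set.Icc (0 : ℝ) 1 := ⟨le_rfl, zero_le_one⟩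
  have h1 : (1 : ℝ) ∈ Set.Icc (0 : ℝ) 1 := ⟨zero_le_one, le_rfl⟩
  refine ⟨⟨2 * (1 - p) * p * (1 / (1 - γ) - 1 / (1 - p)) / (1 - p ^ 2),
      (p ^ 2 + (1 - p) ^ 2 + 2 * (1 - p) * p * (1 + 1 / (1 - p))) / (1 - p ^ 2),
      fun q hq => by rw [hT' q hq, singleReceptionTime]; ring⟩,
    fun hγp => ⟨?_, fun q hq => hmono 1 h1 q hq (singleReceptionTime_one_le hγp hp1 hq.2)⟩,
    fun hpγ => ⟨?_, fun q hq => hmono 0 h0 q hq (singleReceptionTime_zero_le hpγ hγ1 hq.1)⟩⟩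
  · rw [hT' 1 h1, singleReceptionTime]
    ring
  · rw [hT' 0 h0, singleReceptionTime]
    field_simp [(by linarith : (1 : ℝ) - p ≠ 0)]
    ring

/-- Unreliable D2D: for `0 < p < 1`, `0 ≤ γ < 1`, if `T q` solves the stated
fixed-point equation for each `q ∈ [0,1]`, then `T` is an affine function of
`q`; if `γ ≤ p` then `T` is minimized over `[0,1]` at `q = 1` with minimum
value `(1 + 2p(1-p)/(1-γ))/(1-p²)`, and if `γ ≥ p` then `T` is minimized at
`q = 0` with minimum value `(2p+1)/(1-p²)`. -/
theorem unreliable_local_sharing (p γ : ℝ) (hp0 : 0 < p) (hp1 : p < 1)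
    (hγ0 : 0 ≤ γ) (hγ1 : γ < 1) (T : ℝ → ℝ)
    (hT : ∀ q ∈ Set.Icc (0 : ℝ) 1,
      T q = p ^ 2 * (1 + T q) + (1 - p) ^ 2 * 1 +
        2 * (1 - p) * p * (q * (1 + 1 / (1 - γ)) + (1 - q) * (1 + 1 / (1 - p)))) :
    (∃ A B : ℝ, ∀ q ∈ Set.Icc (0 : ℝ) 1, T q = A * q + B) ∧
    (γ ≤ p →
      T 1 = (1 + 2 * p * (1 - p) / (1 - γ)) / (1 - p ^ 2) ∧
      ∀ q ∈ Set.Icc (0 : ℝ) 1, T 1 ≤ T q) ∧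
    (γ ≥ p →
      T 0 = (2 * p + 1) / (1 - p ^ 2) ∧
      ∀ q ∈ Set.Icc (0 : ℝ) 1, T 0 ≤ T q) :=
  unreliable_local_sharing_general p γ hp0 hp1 hγ1 T hT
end

section
/- For every real p with 1/2 ≤ p < 1 and every integer N ≥ 1, 1/(1−p) ≥ 1 + (1 − (1−p)^N)/(1 − p^N). -/
/-!
With `q = 1 - p`, the claim is `(1 - q ^ N) / (1 - p ^ N) ≤ 1 / q - 1 = p / q`, that is
`p ^ (N + 1) - q ^ (N + 1) ≤ p - q`. This holds whenever `0 ≤ q ≤ p` and `p + q ≤ 1`, because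
`p ^ (n + 1) - q ^ (n + 1) ≤ (p - q) * (p + q) ^ n`.
-/

theorem pow_succ_sub_pow_succ_le_mul_add_pow {R : Type*} [CommRing R] [LinearOrder R]
    [IsStrictOrderedRing R] {p q : R} (hq : 0 ≤ q) (hqp : q ≤ p) (n : ℕ) :
    p ^ (n + 1) - q ^ (n + 1) ≤ (p - q) * (p + q) ^ n := by
  induction n with
  | zero => simp
  | succ n ih =>
    have hp : 0 ≤ p := hq.trans hqp
    have hqn : q ^ (n + 1) ≤ q * (p + q) ^ n := by
      rw [pow_succ']
      gcongr
      exact le_add_of_nonneg_left hp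
    calc p ^ (n + 2) - q ^ (n + 2)
        = p * (p ^ (n + 1) - q ^ (n + 1)) + (p - q) * q ^ (n + 1) := by ring
      _ ≤ p * ((p - q) * (p + q) ^ n) + (p - q) * (q * (p + q) ^ n) := by
        gcongr
      _ = (p - q) * (p + q) ^ (n + 1) := by ring

theorem pow_succ_sub_pow_succ_le_sub {R : Type*} [CommRing R] [LinearOrder R]
    [IsStrictOrderedRing R] {p q : R} (hq : 0 ≤ q) (hqp : q ≤ p) (hpq : p + q ≤ 1) (n : ℕ) :
    p ^ (n + 1) - q ^ (n + 1) ≤ p - q :=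
  calc p ^ (n + 1) - q ^ (n + 1) ≤ (p - q) * (p + q) ^ n :=
        pow_succ_sub_pow_succ_le_mul_add_pow hq hqp n
    _ ≤ p - q := mul_le_of_le_one_right (sub_nonneg.mpr hqp)
        (pow_le_one₀ (hq.trans (le_add_of_nonneg_left (hq.trans hqp))) hpq)

/-- For every real `p` with `1/2 ≤ p < 1` and every integer `N ≥ 1`,
`1/(1-p) ≥ 1 + (1 - (1-p)^N)/(1 - p^N)`. -/
theorem single_user_vs_group (p : ℝ) (hp : 1 / 2 ≤ p) (hp1 : p < 1)
    (N : ℕ) (hN : 1 ≤ N) :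
    1 / (1 - p) ≥ 1 + (1 - (1 - p) ^ N) / (1 - p ^ N) := by
  set q := 1 - p
  have hq0 : 0 < q := sub_pos.mpr hp1
  have hpN : 0 < 1 - p ^ N :=
    sub_pos.mpr (pow_lt_one₀ (by linarith) hp1 (by omega))
  have hkey : p ^ (N + 1) - q ^ (N + 1) ≤ p - q :=
    pow_succ_sub_pow_succ_le_sub hq0.le (by linarith) (by linarith) N
  have hratio : (1 - q ^ N) / (1 - p ^ N) ≤ p / q := by
    rw [div_le_div_iff₀ hpN hq0]
    linear_combination hkey
  calc 1 + (1 - q ^ N) / (1 - p ^ N) ≤ 1 + p / q := by gcongr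
    _ = 1 / q := by field_simp; ring
end
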